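/- (Lemma B.2) Let $p \ge 2$ and $r_1 \ge 1$ be integers with $r_1 \le \frac{2}{3} p$. Then the set $\mathcal{H}_2$ of vectors in $\{-1, 0, 1\}^{p}$ having exactly $r_1$ nonzero coordinates contains a subset whose cardinality is at least $\exp\big(\frac{r_1}{2}\log\frac{p - r_1/2}{r_1}\big)$ and whose elements have pairwise Hamming distance strictly greater than $r_1/2$. -/

import Mathlib

noncomputable section

/-- Hamming distance between two vectors: the number of coordinates where they differ. -/
def hamming {ι : Type*} (v w : ι → ℝ) : ℕ := Nat.card {i // v i ≠ w i}

/-- ℓ0 norm: the number of nonzero coordinates. -/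
def l0 {ι : Type*} (v : ι → ℝ) : ℕ := Nat.card {i // v i ≠ 0}

/-!
A Gilbert–Varshamov argument. The admissible vectors form the Hamming sphere of radius `r₁`
about `0` in `{-1, 0, 1}^p`, of size `C(p, r₁) 2^r₁`. The balls of radius `s = ⌊r₁/2⌋` about the
points of a maximal subset with pairwise distances `> s` cover this sphere, and each has size
`∑_{j ≤ s} C(p, j) 2^j ≤ (4/3) C(p, s) 2^s`, the terms growing by a factor `≥ 4` while `3j + 2 ≤ p`.
The ratio of consecutive terms `C(p, k) 2^k` is `2(p - k)/(k + 1)`: at least `2b` for `k = s` and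
at least `b = (p - r₁/2)/r₁ ≥ 1` for `k < r₁`, so `C(p, r₁) 2^r₁ ≥ 2 b^(r₁ - s) C(p, s) 2^s` and
the packing has at least `(3/2) b^(r₁ - s) ≥ b^(r₁/2)` points.
-/

open Finset Fintype

section HammingCount

variable {ι α : Type*} [Fintype ι] [DecidableEq ι] [DecidableEq α]

lemma card_filter_piFinset_disagree_eq (S : Finset α) {w : ι → α} (hw : ∀ i, w i ∈ S)
    (D : Finset ι) :
    #{x ∈ piFinset fun _ : ι => S | ({i | x i ≠ w i} : Finset ι) = D} = (#S - 1) ^ #D := by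
  have hfiber : {x ∈ piFinset fun _ : ι => S | ({i | x i ≠ w i} : Finset ι) = D} =
      piFinset fun i => if i ∈ D then S.erase (w i) else {w i} := by
    ext x
    simp only [mem_filter, mem_piFinset, Finset.ext_iff, mem_univ, true_and]
    refine ⟨fun ⟨hS, hD⟩ i => ?_, fun h => ⟨fun i => ?_, fun i => ?_⟩⟩
    · split_ifs with hi
      · exact mem_erase.2 ⟨(hD i).2 hi, hS i⟩
      · exact mem_singleton.2 (not_not.1 (mt (hD i).1 hi))
    · have hx := h i
      split_ifs at hx with hi
      · exact (mem_erase.1 hx).2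
      · rw [mem_singleton.1 hx]; exact hw i
    · have hx := h i
      split_ifs at hx with hi
      · simp [hi, (mem_erase.1 hx).1]
      · simp [hi, mem_singleton.1 hx]
  rw [hfiber, card_piFinset]
  simp only [apply_ite card, card_erase_of_mem (hw _), card_singleton]
  rw [prod_ite_mem_eq, prod_const]

lemma card_filter_piFinset_hammingDist_eq (S : Finset α) {w : ι → α} (hw : ∀ i, w i ∈ S)
    (j : ℕ) :
    #{x ∈ piFinset fun _ : ι => S | hammingDist x w = j} = (card ι).choose j * (#S - 1) ^ j := by
  have hmaps : ∀ x ∈ {x ∈ piFinset fun _ : ι => S | hammingDist x w = j},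
      ({i | x i ≠ w i} : Finset ι) ∈ powersetCard j univ :=
    fun x hx => mem_powersetCard.2 ⟨subset_univ _, (mem_filter.1 hx).2⟩
  rw [card_eq_sum_card_fiberwise hmaps]
  have hfiber : ∀ D ∈ powersetCard j (univ : Finset ι),
      #{x ∈ {x ∈ piFinset fun _ : ι => S | hammingDist x w = j} |
        ({i | x i ≠ w i} : Finset ι) = D} = (#S - 1) ^ j := by
    intro D hD
    rw [filter_filter, ← (mem_powersetCard.1 hD).2, ← card_filter_piFinset_disagree_eq S hw D]
    congr 1
    refine filter_congr fun x _ => ⟨fun h => h.2, fun h => ⟨?_, h⟩⟩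
    rw [hammingDist, h]
  rw [sum_congr rfl hfiber, sum_const, card_powersetCard, card_univ, smul_eq_mul]

lemma card_filter_piFinset_hammingDist_le (S : Finset α) {w : ι → α} (hw : ∀ i, w i ∈ S)
    (s : ℕ) :
    #{x ∈ piFinset fun _ : ι => S | hammingDist x w ≤ s} =
      ∑ j ∈ range (s + 1), (card ι).choose j * (#S - 1) ^ j := by
  rw [card_eq_sum_card_fiberwise (f := fun x => hammingDist x w) (t := range (s + 1))
    fun x hx => mem_range_succ_iff.2 (mem_filter.1 hx).2]
  refine sum_congr rfl fun j hj => ?_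
  rw [filter_filter, ← card_filter_piFinset_hammingDist_eq S hw j]
  congr 1
  exact filter_congr fun x _ =>
    ⟨fun h => h.2, fun h => ⟨by simpa [h, Nat.lt_succ_iff] using hj, h⟩⟩

end HammingCount

theorem Finset.exists_subset_pairwise_not_rel_card_le_mul {α : Type*} (H : Finset α)
    (R : α → α → Prop) [DecidableRel R] (hrefl : ∀ a, R a a)
    (hsymm : ∀ a b, R a b → R b a) {N : ℕ}
    (hN : ∀ a ∈ H, #{x ∈ H | R x a} ≤ N) :
    ∃ A ⊆ H, (A : Set α).Pairwise (fun a b => ¬R a b) ∧ #H ≤ #A * N := by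
  classical
  obtain ⟨A, hA, hmax⟩ := exists_max_image
    (H.powerset.filter fun A : Finset α => (A : Set α).Pairwise fun a b => ¬R a b) card
    ⟨∅, by simp⟩
  rw [mem_filter, mem_powerset] at hA
  refine ⟨A, hA.1, hA.2, ?_⟩
  -- a maximal packing is a covering: a point far from all of `A` could be added to it
  have hcover : H ⊆ A.biUnion fun a => {x ∈ H | R x a} := by
    intro x hx
    simp only [mem_biUnion, mem_filter]
    by_contra! hfar
    have hxA : x ∉ A := fun h => hfar x h hx (hrefl x)
    have hins := hmax (insert x A) <| mem_filter.2 ⟨mem_powerset.2 (insert_subset hx hA.1), by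
      rw [coe_insert]
      exact hA.2.insert fun b hb _ => ⟨hfar b hb hx, fun h => hfar b hb hx (hsymm b x h)⟩⟩
    rw [card_insert_of_notMem hxA] at hins
    omega
  calc #H ≤ #(A.biUnion fun a => {x ∈ H | R x a}) := card_le_card hcover
    _ ≤ ∑ a ∈ A, #{x ∈ H | R x a} := card_biUnion_le
    _ ≤ ∑ _a ∈ A, N := sum_le_sum fun a ha => hN a (hA.1 ha)
    _ = #A * N := by rw [sum_const, smul_eq_mul]

lemma sub_one_mul_sum_range_le {f : ℕ → ℝ} {c : ℝ} {s : ℕ} (hf0 : 0 ≤ f 0)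
    (hf : ∀ j < s, c * f j ≤ f (j + 1)) :
    (c - 1) * ∑ j ∈ range (s + 1), f j ≤ c * f s := by
  induction s with
  | zero => rw [sum_range_one, sub_mul]; linarith
  | succ s ih =>
    have hsum := ih fun j hj => hf j (by omega)
    have hlast := hf s (by omega)
    rw [sum_range_succ]
    linarith

lemma pow_sub_mul_le_of_mul_le_succ {f : ℕ → ℝ} {b : ℝ} (hb : 0 ≤ b) {m n : ℕ}
    (hmn : m ≤ n) (hf : ∀ k, m ≤ k → k < n → b * f k ≤ f (k + 1)) : b ^ (n - m) * f m ≤ f n := by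
  induction n, hmn using Nat.le_induction with
  | base => simp
  | succ n hmn ih =>
    calc b ^ (n + 1 - m) * f m = b * (b ^ (n - m) * f m) := by
          rw [Nat.sub_add_comm hmn, pow_succ]; ring
      _ ≤ b * f n := mul_le_mul_of_nonneg_left (ih fun k h1 h2 => hf k h1 (by omega)) hb
      _ ≤ f (n + 1) := hf n hmn (by omega)

lemma mul_choose_mul_pow_le_succ {p k : ℕ} {c m : ℝ} (hm : 0 ≤ m) (hk : k ≤ p)
    (h : c * (k + 1) ≤ m * (p - k)) :
    c * (p.choose k * m ^ k) ≤ p.choose (k + 1) * m ^ (k + 1) := by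
  have hid : (p.choose (k + 1) : ℝ) * (k + 1) = p.choose k * (p - k) := by
    rw [← Nat.cast_sub hk]; exact_mod_cast Nat.choose_succ_right_eq p k
  refine le_of_mul_le_mul_right ?_ (k.cast_add_one_pos : (0 : ℝ) < k + 1)
  calc c * (p.choose k * m ^ k) * (k + 1) = c * (k + 1) * (p.choose k * m ^ k) := by ring
    _ ≤ m * (p - k) * (p.choose k * m ^ k) := by gcongr
    _ = p.choose (k + 1) * m ^ (k + 1) * (k + 1) := by
      rw [pow_succ]; linear_combination (m * m ^ k) * hid.symm

lemma three_mul_sum_choose_mul_two_pow_le {p s : ℕ} (hs : 3 * s ≤ p) :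
    3 * ∑ j ∈ range (s + 1), (p.choose j * 2 ^ j : ℝ) ≤ 4 * (p.choose s * 2 ^ s) := by
  have := sub_one_mul_sum_range_le (f := fun j => (p.choose j * 2 ^ j : ℝ)) (c := 4) (s := s)
    (by positivity) fun j hj => mul_choose_mul_pow_le_succ zero_le_two (by omega) <| by
      have : (3 * j + 2 : ℝ) ≤ p := by exact_mod_cast (by omega : 3 * j + 2 ≤ p)
      linarith
  norm_num at this
  exact this

lemma two_mul_pow_mul_choose_mul_two_pow_le {p r : ℕ} (hr : 1 ≤ r) (hrp : 3 * r ≤ 2 * p) :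
    2 * (((p : ℝ) - r / 2) / r) ^ (r - r / 2) * (p.choose (r / 2) * 2 ^ (r / 2)) ≤
      p.choose r * 2 ^ r := by
  set s := r / 2
  set b : ℝ := ((p : ℝ) - r / 2) / r with hb
  have hr0 : (0 : ℝ) < r := by exact_mod_cast hr
  have hrp' : 3 * (r : ℝ) ≤ 2 * p := by exact_mod_cast hrp
  have hs' : 2 * (s : ℝ) ≤ r := by exact_mod_cast (by omega : 2 * s ≤ r)
  have hb0 : 0 ≤ b := div_nonneg (by linarith) hr0.le
  have hbk : ∀ k < r, b * (k + 1) ≤ p - r / 2 := by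
    intro k hk
    calc b * (k + 1) ≤ b * r := by gcongr; exact_mod_cast hk
      _ = p - r / 2 := by rw [hb]; field_simp
  have hbase : 2 * b * (p.choose s * 2 ^ s) ≤ p.choose (s + 1) * 2 ^ (s + 1) :=
    mul_choose_mul_pow_le_succ zero_le_two (by omega) <| by
      have := hbk s (by omega)
      linarith
  have hsteps : b ^ (r - (s + 1)) * (p.choose (s + 1) * 2 ^ (s + 1)) ≤ p.choose r * 2 ^ r :=
    pow_sub_mul_le_of_mul_le_succ (f := fun j => (p.choose j * 2 ^ j : ℝ)) hb0 (by omega)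
      fun k _ hk => mul_choose_mul_pow_le_succ zero_le_two (by omega) <| by
        have := hbk k hk
        have : (k + 1 : ℝ) ≤ r := by exact_mod_cast hk
        linarith
  calc 2 * b ^ (r - s) * (p.choose s * 2 ^ s)
      = b ^ (r - (s + 1)) * (2 * b * (p.choose s * 2 ^ s)) := by
        rw [show r - s = r - (s + 1) + 1 by omega, pow_succ]; ring
    _ ≤ b ^ (r - (s + 1)) * (p.choose (s + 1) * 2 ^ (s + 1)) := by gcongr
    _ ≤ p.choose r * 2 ^ r := hsteps

lemma exp_mul_log_le_of_choose_mul_two_pow_le {p r a : ℕ} (hr : 1 ≤ r)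
    (hrp : 3 * r ≤ 2 * p)
    (ha : p.choose r * 2 ^ r ≤ a * ∑ j ∈ range (r / 2 + 1), p.choose j * 2 ^ j) :
    Real.exp (r / 2 * Real.log (((p : ℝ) - r / 2) / r)) ≤ a := by
  set s := r / 2
  set b : ℝ := ((p : ℝ) - r / 2) / r with hb
  have hr0 : (0 : ℝ) < r := by exact_mod_cast hr
  have hb1 : 1 ≤ b := by
    rw [hb, le_div_iff₀ hr0]
    have : 3 * (r : ℝ) ≤ 2 * p := by exact_mod_cast hrp
    linarith
  have hexp : (r / 2 : ℝ) ≤ (r - s : ℕ) := by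
    rw [Nat.cast_sub (by omega)]
    have : 2 * (s : ℝ) ≤ r := by exact_mod_cast (by omega : 2 * s ≤ r)
    linarith
  have hq : (0 : ℝ) < p.choose s * 2 ^ s := by
    have := Nat.choose_pos (by omega : s ≤ p)
    positivity
  have hvol := three_mul_sum_choose_mul_two_pow_le (p := p) (s := s) (by omega)
  have hgrowth := two_mul_pow_mul_choose_mul_two_pow_le hr hrp
  have ha' : (p.choose r * 2 ^ r : ℝ) ≤ a * ∑ j ∈ range (s + 1), (p.choose j * 2 ^ j : ℝ) :=
    mod_cast ha
  have hpow : b ^ (r - s) ≤ a := by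
    have : 0 ≤ (a : ℝ) := a.cast_nonneg
    nlinarith
  calc Real.exp (r / 2 * Real.log b) = b ^ (r / 2 : ℝ) := by
        rw [Real.rpow_def_of_pos (by linarith), mul_comm]
    _ ≤ b ^ ((r - s : ℕ) : ℝ) := Real.rpow_le_rpow_of_exponent_le hb1 hexp
    _ ≤ a := by rwa [Real.rpow_natCast]

lemma hamming_eq_hammingDist {ι : Type*} [Fintype ι] (v w : ι → ℝ) :
    hamming v w = hammingDist v w := by
  rw [hamming, hammingDist, Nat.card_eq_fintype_card, Fintype.card_subtype]

lemma l0_eq_hammingNorm {ι : Type*} [Fintype ι] (v : ι → ℝ) : l0 v = hammingNorm v := by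
  rw [l0, hammingNorm, Nat.card_eq_fintype_card, Fintype.card_subtype]

theorem packing_subset_main_effects_general (p r1 : ℕ) (h2 : 1 ≤ r1)
    (h3 : (r1 : ℝ) ≤ 2 / 3 * (p : ℝ)) :
    ∃ B : Finset (Fin p → ℝ),
      (∀ v ∈ B, (∀ i, v i = -1 ∨ v i = 0 ∨ v i = 1) ∧ l0 v = r1) ∧
      Real.exp ((r1 : ℝ) / 2 * Real.log (((p : ℝ) - (r1 : ℝ) / 2) / (r1 : ℝ))) ≤
        (B.card : ℝ) ∧
      ∀ v ∈ B, ∀ w ∈ B, v ≠ w → (r1 : ℝ) / 2 < (hamming v w : ℝ) := by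
  have hrp : 3 * r1 ≤ 2 * p := by exact_mod_cast (by linarith : (3 * r1 : ℝ) ≤ 2 * p)
  set S : Finset ℝ := {-1, 0, 1}
  have hS : #S = 3 := by norm_num [S]
  set H := {x ∈ piFinset fun _ : Fin p => S | hammingDist x 0 = r1}
  obtain ⟨A, hAH, hApart, hAcard⟩ := H.exists_subset_pairwise_not_rel_card_le_mul
    (fun x y => hammingDist x y ≤ r1 / 2) (by simp) (fun x y h => hammingDist_comm x y ▸ h)
    (N := ∑ j ∈ range (r1 / 2 + 1), p.choose j * 2 ^ j) fun a ha => by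
      have := card_filter_piFinset_hammingDist_le S (mem_piFinset.1 (mem_filter.1 ha).1) (r1 / 2)
      rw [hS, Fintype.card_fin] at this
      exact this ▸ card_le_card (filter_subset_filter _ (filter_subset _ _))
  have hH : #H = p.choose r1 * 2 ^ r1 := by
    rw [card_filter_piFinset_hammingDist_eq S (by simp [S]), hS, Fintype.card_fin]
  refine ⟨A, fun v hv => ?_, ?_, fun v hv w hw hvw => ?_⟩
  · obtain ⟨hvS, hv0⟩ := mem_filter.1 (hAH hv)
    refine ⟨fun i => by simpa [S] using mem_piFinset.1 hvS i, ?_⟩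
    rw [l0_eq_hammingNorm, ← hammingDist_zero_right, hv0]
  · exact exp_mul_log_le_of_choose_mul_two_pow_le h2 hrp (hH ▸ hAcard)
  · have hfar : r1 / 2 < hammingDist v w := not_le.1 (hApart hv hw hvw)
    rw [hamming_eq_hammingDist]
    have : (r1 : ℝ) < 2 * (hammingDist v w : ℕ) := mod_cast (by omega : r1 < 2 * hammingDist v w)
    linarith

/-- Lemma B.2. If `p ≥ 2`, `r1 ≥ 1` and `r1 ≤ (2/3) p`, then the set of
vectors in `{-1,0,1}^p` with exactly `r1` nonzero coordinates contains a subset of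
cardinality at least `exp((r1/2) log((p - r1/2)/r1))` whose elements have pairwise Hamming
distance greater than `r1/2`. -/
theorem packing_subset_main_effects (p r1 : ℕ) (h1 : 2 ≤ p) (h2 : 1 ≤ r1)
    (h3 : (r1 : ℝ) ≤ 2 / 3 * (p : ℝ)) :
    ∃ B : Finset (Fin p → ℝ),
      (∀ v ∈ B, (∀ i, v i = -1 ∨ v i = 0 ∨ v i = 1) ∧ l0 v = r1) ∧
      Real.exp ((r1 : ℝ) / 2 * Real.log (((p : ℝ) - (r1 : ℝ) / 2) / (r1 : ℝ))) ≤
        (B.card : ℝ) ∧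
      ∀ v ∈ B, ∀ w ∈ B, v ≠ w → (r1 : ℝ) / 2 < (hamming v w : ℝ) :=
  packing_subset_main_effects_general p r1 h2 h3

end
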